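/- For the 6-dimensional Lie algebra Φ_{6,6} with brackets [X,Y_i]=iY_i for i=1,...,5, [Y₁,Y₂]=Y₃, [Y₁,Y₃]=Y₄, [Y₁,Y₄]=Y₅, [Y₂,Y₃]=Y₅, the bracket satisfies the Jacobi identity and the eigenvalues of ad(F̂) for the principal element F̂ = (1/5)X of the Frobenius functional F = Y₅* are {0, 1/5, 2/5, 3/5, 4/5, 1}. -/

import Mathlib

/-!
`ad X` multiplies `Yᵢ` by `i`, so `ad F̂` for `F̂ = X/5` is diagonal with entries `i/5`; in particular
`F([F̂, x]) = x₅ = F(x)`. The form `F([x, y])` pairs `X` with `Y₅`, `Y₁` with `Y₄` and `Y₂` with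
`Y₃` with nonzero coefficients, hence is nondegenerate, which is the Frobenius condition.
-/
noncomputable section

/-- The bracket of `Φ_{6,6}` on `Fin 6 → ℂ`, with basis `X, Y₁,…,Y₅` indexed
`0,…,5` and nonzero brackets `[X,Yᵢ] = i Yᵢ` (`i = 1,…,5`), `[Y₁,Y₂]=Y₃`,
`[Y₁,Y₃]=Y₄`, `[Y₁,Y₄]=Y₅`, `[Y₂,Y₃]=Y₅`, extended antisymmetrically and
bilinearly. -/
def brPhi66 (x y : Fin 6 → ℂ) : Fin 6 → ℂ :=
  ![ 0,
     (x 0 * y 1 - x 1 * y 0),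
     2 * (x 0 * y 2 - x 2 * y 0),
     3 * (x 0 * y 3 - x 3 * y 0) + (x 1 * y 2 - x 2 * y 1),
     4 * (x 0 * y 4 - x 4 * y 0) + (x 1 * y 3 - x 3 * y 1),
     5 * (x 0 * y 5 - x 5 * y 0) + (x 1 * y 4 - x 4 * y 1) + (x 2 * y 3 - x 3 * y 2) ]

open Matrix Module

theorem brPhi66_jacobi (x y z : Fin 6 → ℂ) :
    brPhi66 (brPhi66 x y) z + brPhi66 (brPhi66 y z) x + brPhi66 (brPhi66 z x) y = 0 := by
  funext i
  fin_cases i <;> simp [brPhi66] <;> ring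

def brPhi66FrobeniusForm : LinearMap.BilinForm ℂ (Fin 6 → ℂ) :=
  LinearMap.mk₂ ℂ (fun x y => brPhi66 x y 5)
    (fun _ _ _ => by simp only [brPhi66, Pi.add_apply, cons_val]; ring)
    (fun _ _ _ => by simp only [brPhi66, Pi.smul_apply, smul_eq_mul, cons_val]; ring)
    (fun _ _ _ => by simp only [brPhi66, Pi.add_apply, cons_val]; ring)
    (fun _ _ _ => by simp only [brPhi66, Pi.smul_apply, smul_eq_mul, cons_val]; ring)

theorem brPhi66FrobeniusForm_nondegenerate : brPhi66FrobeniusForm.Nondegenerate := by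
  refine .ofSeparatingLeft fun x hx => ?_
  have h : ∀ j : Fin 6, brPhi66 x (Pi.single j 1) 5 = 0 := fun j => hx _
  funext i
  fin_cases i
  · simpa [brPhi66] using h 5
  · simpa [brPhi66] using h 4
  · simpa [brPhi66] using h 3
  · simpa [brPhi66] using h 2
  · simpa [brPhi66] using h 1
  · simpa [brPhi66] using h 0

theorem brPhi66_smul_single_zero_apply (c : ℂ) (x : Fin 6 → ℂ) (i : Fin 6) :
    brPhi66 (c • Pi.single 0 1) x i = c * i * x i := by
  fin_cases i <;> simp [brPhi66] <;> ring

theorem exists_fin_six_div_five_eq_iff (μ : ℂ) :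
    (∃ i : Fin 6, (i : ℂ) / 5 = μ) ↔ μ ∈ ({0, 1/5, 2/5, 3/5, 4/5, 1} : Set ℂ) := by
  norm_num [Fin.exists_fin_succ, eq_comm]

/-- For `Φ_{6,6}`: the bracket satisfies the Jacobi identity; `F = Y₅*` is a
Frobenius functional; `F̂ = (1/5) X` is its principal element; and the
eigenvalues of `ad F̂` are `{0, 1/5, 2/5, 3/5, 4/5, 1}`. -/
theorem phi66_jacobi_and_spectrum :
    (∀ x y z : Fin 6 → ℂ,
      brPhi66 (brPhi66 x y) z + brPhi66 (brPhi66 y z) x + brPhi66 (brPhi66 z x) y = 0) ∧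
    (∃ η : (Fin 6 → ℂ) ≃ₗ[ℂ] Module.Dual ℂ (Fin 6 → ℂ),
      ∀ x y : Fin 6 → ℂ, η x y = brPhi66 x y 5) ∧
    (∀ x : Fin 6 → ℂ, brPhi66 ((1/5 : ℂ) • (Pi.single 0 1 : Fin 6 → ℂ)) x 5 = x 5) ∧
    ∃ M : Matrix (Fin 6) (Fin 6) ℂ,
      (∀ x : Fin 6 → ℂ, M.mulVec x = brPhi66 ((1/5 : ℂ) • (Pi.single 0 1 : Fin 6 → ℂ)) x) ∧
      ∀ μ : ℂ, Module.End.HasEigenvalue (Matrix.toLin' M) μ ↔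
        μ ∈ ({0, 1/5, 2/5, 3/5, 4/5, 1} : Set ℂ) := by
  refine ⟨brPhi66_jacobi, ⟨brPhi66FrobeniusForm.toDual brPhi66FrobeniusForm_nondegenerate,
    fun _ _ => rfl⟩, fun x => ?_, diagonal fun i => (i : ℂ) / 5, fun x => ?_, fun μ => ?_⟩
  · simpa using brPhi66_smul_single_zero_apply (1/5) x 5
  · ext i
    rw [mulVec_diagonal, brPhi66_smul_single_zero_apply]
    ring
  · rw [hasEigenvalue_toLin'_diagonal_iff, exists_fin_six_div_five_eq_iff]
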